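/- Let C be a BL-chain of cancellative type, i.e. for all x, y, z ∈ C, if x + y = x + z and x ⊗ y = x ⊗ z then y = z. Then the monoid of good sequences of C under the sum of sequences is cancellative: for all good sequences 𝐚, 𝐛, 𝐜 in C, if 𝐚 + 𝐜 = 𝐛 + 𝐜 then 𝐚 = 𝐛. -/

import Mathlib

/-- A BL-algebra: a bounded lattice with a commutative monoid operation `mul`
(written ⊗, with unit `⊤` playing the role of 1 and `⊥` the role of 0),
a residuum `imp` (written →), satisfying residuation, divisibility and
prelinearity. -/
class BLAlgebra (L : Type*) extends Lattice L, BoundedOrder L where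
  mul : L → L → L
  imp : L → L → L
  mul_comm : ∀ x y : L, mul x y = mul y x
  mul_assoc : ∀ x y z : L, mul (mul x y) z = mul x (mul y z)
  mul_top : ∀ x : L, mul x ⊤ = x
  residuation : ∀ x y z : L, mul x y ≤ z ↔ x ≤ imp y z
  divisibility : ∀ x y : L, x ⊓ y = mul x (imp x y)
  prelinearity : ∀ x y : L, imp x y ⊔ imp y x = ⊤

namespace BLAlgebra

variable {L : Type*} [BLAlgebra L]

/-- Negation: x̄ := x → 0. -/
def neg (x : L) : L := imp x ⊥

/-- Pseudo-addition: x ⊘ y := x̄ → y. -/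
def oslash (x y : L) : L := imp (neg x) y

/-- Addition: x + y := (x ⊘ y) ∧ (y ⊘ x). -/
def add (x y : L) : L := oslash x y ⊓ oslash y x

end BLAlgebra

open BLAlgebra
/-- A good sequence in a BL-algebra `L` (indexed from 0, so `a 0` is the entry a₁):
aᵢ + aᵢ₊₁ = aᵢ for all i, and aᵣ = 0 for all sufficiently large r. -/
def BLAlgebra.IsGood {L : Type*} [BLAlgebra L] (a : ℕ → L) : Prop :=
  (∀ i, add (a i) (a (i + 1)) = a i) ∧ ∃ n, ∀ r, n < r → a r = ⊥

/-- Sum (under the BL-algebra addition) of a list of elements. -/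
def BLAlgebra.bigAdd {L : Type*} [BLAlgebra L] (l : List L) : L := l.foldr add ⊥

/-- Sum of sequences: cᵢ := aᵢ + (aᵢ₋₁ ⊗ b₁) + ⋯ + (a₁ ⊗ bᵢ₋₁) + bᵢ
(written with 0-based indexing: the entry at index k is
a k + (a (k-1) ⊗ b 0) + ⋯ + (a 0 ⊗ b (k-1)) + b k). -/
def BLAlgebra.seqAdd {L : Type*} [BLAlgebra L] (a b : ℕ → L) : ℕ → L :=
  fun k => bigAdd (a k :: (((List.range k).map fun j => mul (a (k - 1 - j)) (b j)) ++ [b k]))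

/-
In a BL-chain, `x + y ≠ ⊤` forces `x ⊗ y = ⊥`: one of `x̄ ≤ y`, `ȳ ≤ x` fails, so by linearity
`y ≤ x̄` or `x ≤ ȳ`. Hence if moreover the chain is of cancellative type, `x + y = x ≠ ⊤` forces
`y = ⊥` (compare with `x + ⊥ = x`, `x ⊗ ⊥ = ⊥`), and every good sequence has the shape
`(⊤, …, ⊤, α, ⊥, ⊥, …)` with `α ≠ ⊤` at some index `m`. If `a` and `c` have such shapes with
steps `α` at `m` and `γ` at `n`, then `a + c` is `⊤` below `m + n`, `α + γ` at `m + n` and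
`α ⊗ γ` at `m + n + 1`. Comparing `a + c = b + c` at these two indices, a step of `b` later than
that of `a` would give `α ⊗ γ = ⊤` or `α ⊗ γ ≥ γ` together with `α + γ = ⊤`, and either way
`α = ⊤`. So `a` and `b` step at the same index, and there `α + γ = β + γ`, `α ⊗ γ = β ⊗ γ`.
-/

namespace BLAlgebra

variable {L : Type*} [BLAlgebra L]

lemma top_mul (x : L) : mul ⊤ x = x := (mul_comm ⊤ x).trans (mul_top x)

lemma mul_le_mul_right {x x' : L} (h : x ≤ x') (y : L) : mul x y ≤ mul x' y :=
  (residuation x y _).2 (h.trans ((residuation x' y _).1 le_rfl))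

lemma mul_le_right (x y : L) : mul x y ≤ y :=
  (mul_le_mul_right le_top y).trans_eq (top_mul y)

lemma mul_le_left (x y : L) : mul x y ≤ x :=
  (mul_comm x y).trans_le (mul_le_right y x)

lemma mul_bot (x : L) : mul x ⊥ = ⊥ := le_bot_iff.1 (mul_le_right x ⊥)

lemma bot_mul (x : L) : mul ⊥ x = ⊥ := le_bot_iff.1 (mul_le_left ⊥ x)

lemma mul_eq_bot_iff_le_neg {x y : L} : mul x y = ⊥ ↔ x ≤ neg y :=
  le_bot_iff.symm.trans (residuation x y ⊥)

lemma imp_eq_top_iff {x y : L} : imp x y = ⊤ ↔ x ≤ y := by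
  rw [← top_le_iff, ← residuation, top_mul]

lemma top_imp (x : L) : imp ⊤ x = x :=
  eq_of_forall_le_iff fun y => by rw [← residuation, mul_top]

lemma le_neg_neg (x : L) : x ≤ neg (neg x) := by
  rw [← mul_eq_bot_iff_le_neg, mul_comm, mul_eq_bot_iff_le_neg]

lemma add_eq_top_iff {x y : L} : add x y = ⊤ ↔ neg x ≤ y ∧ neg y ≤ x := by
  rw [add, oslash, oslash, inf_eq_top_iff, imp_eq_top_iff, imp_eq_top_iff]

protected lemma add_comm (x y : L) : add x y = add y x := inf_comm _ _

lemma neg_bot : neg (⊥ : L) = ⊤ := imp_eq_top_iff.2 le_rfl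

protected lemma add_bot (x : L) : add x ⊥ = x := by
  rw [add, oslash, oslash, neg_bot, top_imp]
  exact inf_eq_right.2 (le_neg_neg x)

protected lemma bot_add (x : L) : add ⊥ x = x := by
  rw [BLAlgebra.add_comm, BLAlgebra.add_bot]

protected lemma add_top (x : L) : add x ⊤ = ⊤ :=
  add_eq_top_iff.2 ⟨le_top, by rw [neg, top_imp]; exact bot_le⟩

protected lemma top_add (x : L) : add ⊤ x = ⊤ := by
  rw [BLAlgebra.add_comm, BLAlgebra.add_top]

lemma le_add_right (x y : L) : y ≤ add x y :=
  le_inf ((residuation _ _ _).1 (mul_le_left y _))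
    ((residuation _ _ _).1 ((mul_eq_bot_iff_le_neg.2 (le_neg_neg y)).trans_le bot_le))

lemma mul_eq_bot_of_add_ne_top (htot : ∀ x y : L, x ≤ y ∨ y ≤ x) {x y : L}
    (h : add x y ≠ ⊤) : mul x y = ⊥ := by
  rw [Ne, add_eq_top_iff, not_and_or] at h
  rcases h with h | h
  · rw [mul_comm, mul_eq_bot_iff_le_neg]
    exact (htot _ _).resolve_left h
  · rw [mul_eq_bot_iff_le_neg]
    exact (htot _ _).resolve_left h

lemma eq_bot_of_add_eq_self (htot : ∀ x y : L, x ≤ y ∨ y ≤ x)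
    (hcanc : ∀ x y z : L, add x y = add x z → mul x y = mul x z → y = z) {x y : L}
    (hxy : add x y = x) (hx : x ≠ ⊤) : y = ⊥ :=
  hcanc x y ⊥ (by rw [hxy, BLAlgebra.add_bot])
    (by rw [mul_eq_bot_of_add_ne_top htot (hxy.trans_ne hx), mul_bot])

lemma bigAdd_cons (x : L) (l : List L) : bigAdd (x :: l) = add x (bigAdd l) := rfl

lemma bigAdd_eq_top {l : List L} (h : ⊤ ∈ l) : bigAdd l = ⊤ := by
  induction l with
  | nil => simp at h
  | cons x l ih =>
    rw [bigAdd_cons]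
    rcases List.mem_cons.1 h with rfl | h
    · exact BLAlgebra.top_add _
    · rw [ih h, BLAlgebra.add_top]

lemma bigAdd_eq_bot {l : List L} (h : ∀ x ∈ l, x = ⊥) : bigAdd l = ⊥ := by
  induction l with
  | nil => rfl
  | cons x l ih =>
    rw [bigAdd_cons, h x List.mem_cons_self, BLAlgebra.bot_add]
    exact ih fun y hy => h y (List.mem_cons_of_mem _ hy)

lemma bigAdd_append_of_forall_eq_bot {l₁ : List L} (h : ∀ x ∈ l₁, x = ⊥) (l₂ : List L) :
    bigAdd (l₁ ++ l₂) = bigAdd l₂ := by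
  induction l₁ with
  | nil => rfl
  | cons x l ih =>
    rw [List.cons_append, bigAdd_cons, h x List.mem_cons_self, BLAlgebra.bot_add]
    exact ih fun y hy => h y (List.mem_cons_of_mem _ hy)

lemma bigAdd_append_of_bigAdd_eq_bot (l₁ : List L) {l₂ : List L} (h : bigAdd l₂ = ⊥) :
    bigAdd (l₁ ++ l₂) = bigAdd l₁ := by
  rw [bigAdd, List.foldr_append, ← bigAdd, h, bigAdd]

lemma bigAdd_map_range_eq_of_eq_bot (f : ℕ → L) {i n k : ℕ} (hk : i + n ≤ k)
    (hf : ∀ j < k, (j < i ∨ i + n ≤ j) → f j = ⊥) :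
    bigAdd ((List.range k).map f) = bigAdd ((List.range' i n).map f) := by
  obtain ⟨r, rfl⟩ := Nat.exists_eq_add_of_le hk
  rw [List.range_eq_range', ← List.range'_append, ← List.range'_append, List.map_append,
    List.map_append, bigAdd_append_of_bigAdd_eq_bot, bigAdd_append_of_forall_eq_bot]
  · simp only [Nat.zero_add, Nat.one_mul]
  · simp only [List.mem_map, List.mem_range'_1]
    rintro _ ⟨j, hj, rfl⟩
    exact hf j (by omega) (by omega)
  · refine bigAdd_eq_bot ?_
    simp only [List.mem_map, List.mem_range'_1]
    rintro _ ⟨j, hj, rfl⟩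
    exact hf j (by omega) (by omega)

lemma bigAdd_map_range_eq_single (f : ℕ → L) {i k : ℕ} (hk : i < k)
    (hf : ∀ j < k, j ≠ i → f j = ⊥) : bigAdd ((List.range k).map f) = f i := by
  rw [bigAdd_map_range_eq_of_eq_bot f (i := i) (n := 1) hk (fun j hj hji => hf j hj (by omega))]
  exact BLAlgebra.add_bot (f i)

lemma bigAdd_map_range_eq_pair (f : ℕ → L) {i k : ℕ} (hk : i + 1 < k)
    (hf : ∀ j < k, j ≠ i → j ≠ i + 1 → f j = ⊥) :
    bigAdd ((List.range k).map f) = add (f i) (f (i + 1)) := by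
  rw [bigAdd_map_range_eq_of_eq_bot f (i := i) (n := 2) hk
    (fun j hj hji => hf j hj (by omega) (by omega))]
  simp only [List.range'_succ, List.range'_zero, List.map_cons, List.map_nil, bigAdd_cons]
  rw [bigAdd, List.foldr_nil, BLAlgebra.add_bot]

structure IsStep (a : ℕ → L) (m : ℕ) : Prop where
  eq_top : ∀ i < m, a i = ⊤
  eq_bot : ∀ i, m < i → a i = ⊥

lemma IsStep.ext {a b : ℕ → L} {m : ℕ} (ha : IsStep a m) (hb : IsStep b m) (h : a m = b m) :
    a = b := by
  funext i
  rcases lt_trichotomy i m with hi | rfl | hi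
  · rw [ha.eq_top i hi, hb.eq_top i hi]
  · exact h
  · rw [ha.eq_bot i hi, hb.eq_bot i hi]

lemma IsGood.exists_isStep [Nontrivial L] (htot : ∀ x y : L, x ≤ y ∨ y ≤ x)
    (hcanc : ∀ x y z : L, add x y = add x z → mul x y = mul x z → y = z) {a : ℕ → L}
    (ha : IsGood a) : ∃ m, IsStep a m ∧ a m ≠ ⊤ := by
  classical
  obtain ⟨r, hr⟩ := ha.2
  have hex : ∃ i, a i ≠ ⊤ := ⟨r + 1, by rw [hr (r + 1) r.lt_succ_self]; exact bot_ne_top⟩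
  have hstep := Nat.find_spec hex
  refine ⟨Nat.find hex, ⟨fun i hi => not_not.1 (Nat.find_min hex hi), fun i hi => ?_⟩, hstep⟩
  induction i, hi using Nat.le_induction with
  | base => exact eq_bot_of_add_eq_self htot hcanc (ha.1 _) hstep
  | succ i _ ih => rw [← BLAlgebra.bot_add (a (i + 1)), ← ih, ha.1 i, ih]

/-- Prefixing `⊤` turns the `k`-th entry of `seqAdd a c` into the plain convolution
`∑_{i + j = k + 1} topCons a i ⊗ topCons c j`. -/
def topCons (a : ℕ → L) : ℕ → L
  | 0 => ⊤
  | i + 1 => a i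

@[simp] lemma topCons_zero (a : ℕ → L) : topCons a 0 = ⊤ := rfl

@[simp] lemma topCons_succ (a : ℕ → L) (i : ℕ) : topCons a (i + 1) = a i := rfl

lemma IsStep.topCons {a : ℕ → L} {m : ℕ} (ha : IsStep a m) : IsStep (topCons a) (m + 1) where
  eq_top i hi := by
    cases i with
    | zero => rfl
    | succ i => exact ha.eq_top i (by omega)
  eq_bot i hi := by
    obtain ⟨i, rfl⟩ := Nat.exists_eq_add_one_of_ne_zero (by omega : i ≠ 0)
    exact ha.eq_bot i (by omega)

lemma seqAdd_eq_bigAdd_topCons (a c : ℕ → L) (k : ℕ) :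
    seqAdd a c k = bigAdd ((List.range (k + 2)).map
      fun j => mul (topCons a (k + 1 - j)) (topCons c j)) := by
  rw [List.range_succ_eq_map, List.range_succ, List.map_cons, List.map_map, List.map_append,
    List.map_singleton, bigAdd_cons, seqAdd, bigAdd_cons]
  congr 3
  · simp [mul_top]
  · refine List.map_congr_left fun j hj => ?_
    rw [List.mem_range] at hj
    simp [show k + 1 - (j + 1) = k - 1 - j + 1 by omega]
  · simp [top_mul]

section Entries

variable {a c : ℕ → L} {m n : ℕ}

lemma IsStep.seqAdd_eq_top (ha : IsStep a m) (hc : IsStep c n) {k : ℕ} (hk : k < m + n) :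
    seqAdd a c k = ⊤ := by
  rw [seqAdd_eq_bigAdd_topCons]
  refine bigAdd_eq_top (List.mem_map.2 ⟨min n (k + 1), List.mem_range.2 (by omega), ?_⟩)
  rw [ha.topCons.eq_top _ (by omega), hc.topCons.eq_top _ (by omega), mul_top]

lemma IsStep.seqAdd_add (ha : IsStep a m) (hc : IsStep c n) :
    seqAdd a c (m + n) = add (a m) (c n) := by
  rw [seqAdd_eq_bigAdd_topCons, bigAdd_map_range_eq_pair _ (i := n) (by omega)]
  · rw [show m + n + 1 - n = m + 1 by omega, show m + n + 1 - (n + 1) = m by omega,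
      hc.topCons.eq_top n (by omega), ha.topCons.eq_top m (by omega), topCons_succ, topCons_succ,
      mul_top, top_mul]
  · intro j hj hjn hjn'
    rcases lt_or_gt_of_ne hjn with hj' | hj'
    · rw [ha.topCons.eq_bot _ (by omega), bot_mul]
    · rw [hc.topCons.eq_bot _ (by omega), mul_bot]

lemma IsStep.seqAdd_add_add_one (ha : IsStep a m) (hc : IsStep c n) :
    seqAdd a c (m + n + 1) = mul (a m) (c n) := by
  rw [seqAdd_eq_bigAdd_topCons, bigAdd_map_range_eq_single _ (i := n + 1) (by omega)]
  · rw [show m + n + 1 + 1 - (n + 1) = m + 1 by omega, topCons_succ, topCons_succ]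
  · intro j hj hjn
    rcases lt_or_gt_of_ne hjn with hj' | hj'
    · rw [ha.topCons.eq_bot _ (by omega), bot_mul]
    · rw [hc.topCons.eq_bot _ (by omega), mul_bot]

end Entries

section Cancel

variable {a b c : ℕ → L} {m p n : ℕ}

lemma IsStep.le_of_seqAdd_eq
    (hcanc : ∀ x y z : L, add x y = add x z → mul x y = mul x z → y = z)
    (ha : IsStep a m) (ham : a m ≠ ⊤) (hb : IsStep b p) (hc : IsStep c n)
    (h : seqAdd a c = seqAdd b c) : p ≤ m := by
  by_contra! hmp
  have hsum : add (a m) (c n) = ⊤ := by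
    rw [← ha.seqAdd_add hc, h, hb.seqAdd_eq_top hc (by omega)]
  have hprod : mul (a m) (c n) = seqAdd b c (m + n + 1) := by
    rw [← ha.seqAdd_add_add_one hc, h]
  apply ham
  rcases (by omega : p = m + 1 ∨ m + 1 < p) with rfl | hlt
  · rw [show m + n + 1 = m + 1 + n by omega, hb.seqAdd_add hc] at hprod
    have hmul : mul (a m) (c n) = c n :=
      le_antisymm (mul_le_right _ _) (hprod ▸ le_add_right _ _)
    refine hcanc (c n) (a m) ⊤ ?_ ?_
    · rw [BLAlgebra.add_comm, hsum, BLAlgebra.add_top]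
    · rw [mul_comm, hmul, mul_top]
  · rw [hb.seqAdd_eq_top hc (by omega)] at hprod
    exact top_le_iff.1 (hprod ▸ mul_le_left _ _)

lemma IsStep.apply_eq_of_seqAdd_eq
    (hcanc : ∀ x y z : L, add x y = add x z → mul x y = mul x z → y = z)
    (ha : IsStep a m) (hb : IsStep b m) (hc : IsStep c n) (h : seqAdd a c = seqAdd b c) :
    a m = b m :=
  hcanc (c n) _ _
    (by rw [BLAlgebra.add_comm, ← ha.seqAdd_add hc, h, hb.seqAdd_add hc, BLAlgebra.add_comm])
    (by rw [mul_comm, ← ha.seqAdd_add_add_one hc, h, hb.seqAdd_add_add_one hc, mul_comm])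

end Cancel

end BLAlgebra

/-- If C is a BL-chain of cancellative type (x + y = x + z and
x ⊗ y = x ⊗ z imply y = z), then the monoid of good sequences of C is
cancellative. -/
theorem good_seqs_cancellative_chain {L : Type*} [BLAlgebra L]
    (htot : ∀ x y : L, x ≤ y ∨ y ≤ x)
    (hcanc : ∀ x y z : L, add x y = add x z → mul x y = mul x z → y = z)
    (a b c : ℕ → L) (ha : IsGood a) (hb : IsGood b) (hc : IsGood c)
    (h : seqAdd a c = seqAdd b c) : a = b := by
  rcases subsingleton_or_nontrivial L with _ | _
  · exact Subsingleton.elim a b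
  obtain ⟨m, hA, ham⟩ := ha.exists_isStep htot hcanc
  obtain ⟨p, hB, hbp⟩ := hb.exists_isStep htot hcanc
  obtain ⟨n, hC, -⟩ := hc.exists_isStep htot hcanc
  obtain rfl : m = p := le_antisymm (hB.le_of_seqAdd_eq hcanc hbp hA hC h.symm)
    (hA.le_of_seqAdd_eq hcanc ham hB hC h)
  exact hA.ext hB (hA.apply_eq_of_seqAdd_eq hcanc hB hC h)
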